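/- arXiv:1304.1226 — 2 statements merged into one kernel-verified Lean document; each statement's English description precedes it below -/
import Mathlib

section
/- The ratio of consecutive central trinomial coefficients tends to 3: if Tₙ := C(n, 0)₂ denotes the central trinomial coefficient, then Tₙ > 0 for all n and the sequence of real numbers Tₙ₊₁ / Tₙ converges to 3 as n → ∞. -/
/-!
Since `C(n+1, 0)₂ = C(n, 0)₂ + 2 C(n, 1)₂` and the coefficients decrease away from the centre,
`Tₙ₊₁ ≤ 3 Tₙ`. For the lower bound, expand `T_{a+b} = ∑ⱼ C(a, j)₂ C(b, j)₂`. Cauchy–Schwarz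
makes the even subsequence `T₂ₘ` log-convex, so `T₂ₘ₊₂ / T₂ₘ` increases to a limit `L ≤ 9`, and
it also gives `9ᵐ = (∑ⱼ C(m, j)₂)² ≤ (2m + 1) T₂ₘ`. As `T₂ₘ ≤ Lᵐ`, this forces `L = 9`, and
`Tₙ₊₁ / Tₙ` is squeezed between `(T₂ₘ₊₂ / T₂ₘ) / 3` (with `m = ⌊n/2⌋`) and `3`.
-/

open LaurentPolynomial

/-- The trinomial coefficient `C(n, j)₂`: the coefficient of `x^j` in
`(x⁻¹ + 1 + x)^n`, viewed in the ring of Laurent polynomials `ℤ[T;T⁻¹]`. -/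
noncomputable def trinom (n : ℕ) (j : ℤ) : ℤ :=
  (((T (-1) + 1 + T 1 : ℤ[T;T⁻¹])) ^ n).coeff j

open Finset Filter Topology

theorem LaurentPolynomial.coeff_mul_T {R : Type*} [Semiring R] (f : R[T;T⁻¹]) (m j : ℤ) :
    (f * T m).coeff j = f.coeff (j - m) := by
  rw [T, AddMonoidAlgebra.coeff_mul_single_apply, mul_one, sub_eq_add_neg]

theorem trinom_zero (j : ℤ) : trinom 0 j = if j = 0 then 1 else 0 := by
  rw [trinom, pow_zero, ← T_zero, T_apply]
  simp only [eq_comm]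

theorem trinom_succ (n : ℕ) (j : ℤ) :
    trinom (n + 1) j = trinom n (j + 1) + trinom n j + trinom n (j - 1) := by
  have h : (T (-1) + 1 + T 1 : ℤ[T;T⁻¹]) ^ (n + 1)
      = (T (-1) + 1 + T 1) ^ n * T (-1) + (T (-1) + 1 + T 1) ^ n
        + (T (-1) + 1 + T 1) ^ n * T 1 := by ring
  simp only [trinom, h, AddMonoidAlgebra.coeff_add, Finsupp.coe_add, Pi.add_apply, coeff_mul_T,
    sub_neg_eq_add]

theorem trinom_neg (n : ℕ) (j : ℤ) : trinom n (-j) = trinom n j := by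
  have h : invert (T (-1) + 1 + T 1 : ℤ[T;T⁻¹]) = T (-1) + 1 + T 1 := by
    simp only [map_add, invert_T, map_one, neg_neg]; ring
  rw [trinom, ← invert_apply, map_pow, h, trinom]

theorem trinom_eq_zero_of_notMem_Icc {n : ℕ} {j : ℤ} (hj : j ∉ Icc (-n : ℤ) n) :
    trinom n j = 0 := by
  induction n generalizing j with
  | zero => simp_all [trinom_zero]
  | succ n ih =>
    simp only [mem_Icc, not_and_or, not_le] at hj ih
    rw [trinom_succ, ih (by omega), ih (by omega), ih (by omega)]
    push_cast at hj; omega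

theorem trinom_nonneg (n : ℕ) (j : ℤ) : 0 ≤ trinom n j := by
  induction n generalizing j with
  | zero => rw [trinom_zero]; split_ifs <;> norm_num
  | succ n ih => rw [trinom_succ]; linarith [ih (j + 1), ih j, ih (j - 1)]

theorem trinom_pos (n : ℕ) : 0 < trinom n 0 := by
  induction n with
  | zero => simp [trinom_zero]
  | succ n ih => rw [trinom_succ]; linarith [trinom_nonneg n (0 + 1), trinom_nonneg n (0 - 1)]

theorem trinom_add_one_le {n : ℕ} {j : ℤ} (hj : 0 ≤ j) : trinom n (j + 1) ≤ trinom n j := by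
  induction n generalizing j with
  | zero => simp only [trinom_zero]; split_ifs <;> omega
  | succ n ih =>
    rw [trinom_succ, trinom_succ, add_sub_cancel_right]
    rcases hj.eq_or_lt with rfl | hj
    · rw [zero_sub, trinom_neg, zero_add]; linarith [ih zero_le_one]
    · linarith [ih (j := j + 1) (by omega), ih hj.le,
        sub_add_cancel j 1 ▸ ih (j := j - 1) (by omega)]

theorem trinom_succ_zero_le (n : ℕ) : trinom (n + 1) 0 ≤ 3 * trinom n 0 := by
  have h := trinom_add_one_le (n := n) le_rfl
  rw [trinom_succ, zero_sub, trinom_neg, zero_add] at *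
  linarith

theorem trinom_two_mul_succ_le (m : ℕ) : trinom (2 * (m + 1)) 0 ≤ 9 * trinom (2 * m) 0 := by
  have h : trinom (2 * (m + 1)) 0 ≤ 3 * trinom (2 * m + 1) 0 := trinom_succ_zero_le _
  linarith [trinom_succ_zero_le (2 * m)]

theorem trinom_add (m n : ℕ) (j : ℤ) :
    trinom (m + n) j = ∑ i ∈ Icc (-m : ℤ) m, trinom m i * trinom n (j - i) := by
  induction n generalizing j with
  | zero =>
    simp only [add_zero, trinom_zero, sub_eq_zero, mul_ite, mul_one, mul_zero, sum_ite_eq]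
    split_ifs with hj
    · rfl
    · exact trinom_eq_zero_of_notMem_Icc hj
  | succ n ih =>
    rw [← add_assoc, trinom_succ, ih, ih, ih, ← sum_add_distrib, ← sum_add_distrib]
    refine sum_congr rfl fun i _ => ?_
    rw [trinom_succ, sub_add_eq_add_sub, sub_right_comm]
    ring

theorem LaurentPolynomial.eval₂_one_eq_sum_coeff {R : Type*} [CommSemiring R] (f : R[T;T⁻¹]) :
    eval₂ (RingHom.id R) 1 f = f.coeff.sum fun _ r => r := by
  induction f using LaurentPolynomial.induction_on' with
  | add p q hp hq =>
    rw [map_add, hp, hq, AddMonoidAlgebra.coeff_add,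
      Finsupp.sum_add_index' (fun _ => rfl) fun _ _ _ => rfl]
  | C_mul_T n r =>
    rw [← single_eq_C_mul_T, AddMonoidAlgebra.coeff_single, Finsupp.sum_single_index rfl,
      single_eq_C_mul_T, map_mul, eval₂_C, eval₂_T, one_zpow, Units.val_one, mul_one]
    rfl

theorem sum_trinom (n : ℕ) : ∑ j ∈ Icc (-n : ℤ) n, trinom n j = 3 ^ n := by
  have hsupp : ((T (-1) + 1 + T 1 : ℤ[T;T⁻¹]) ^ n).coeff.support ⊆ Icc (-n : ℤ) n :=
    fun j hj => by_contra fun h => Finsupp.mem_support_iff.mp hj (trinom_eq_zero_of_notMem_Icc h)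
  calc ∑ j ∈ Icc (-n : ℤ) n, trinom n j
      = eval₂ (RingHom.id ℤ) 1 ((T (-1) + 1 + T 1) ^ n) := by
        rw [eval₂_one_eq_sum_coeff, Finsupp.sum_of_support_subset _ hsupp _ fun _ _ => rfl]; rfl
    _ = 3 ^ n := by simp

theorem trinom_two_mul (m : ℕ) : trinom (2 * m) 0 = ∑ j ∈ Icc (-m : ℤ) m, trinom m j ^ 2 := by
  rw [two_mul, trinom_add]
  exact sum_congr rfl fun j _ => by rw [zero_sub, trinom_neg, sq]

theorem trinom_two_mul_succ (m : ℕ) :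
    trinom (2 * (m + 1)) 0 = ∑ j ∈ Icc (-m : ℤ) m, trinom m j * trinom (m + 2) j := by
  rw [show 2 * (m + 1) = m + (m + 2) by ring, trinom_add]
  exact sum_congr rfl fun j _ => by rw [zero_sub, trinom_neg]

theorem sq_trinom_two_mul_succ_le (m : ℕ) :
    trinom (2 * (m + 1)) 0 ^ 2 ≤ trinom (2 * m) 0 * trinom (2 * (m + 2)) 0 := by
  have hsub : Icc (-m : ℤ) m ⊆ Icc (-(m + 2 : ℕ) : ℤ) (m + 2 : ℕ) := by
    intro j; simp only [mem_Icc]; omega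
  calc trinom (2 * (m + 1)) 0 ^ 2
      ≤ (∑ j ∈ Icc (-m : ℤ) m, trinom m j ^ 2) * ∑ j ∈ Icc (-m : ℤ) m, trinom (m + 2) j ^ 2 := by
        rw [trinom_two_mul_succ]; exact sum_mul_sq_le_sq_mul_sq _ _ _
    _ ≤ trinom (2 * m) 0 * trinom (2 * (m + 2)) 0 := by
        rw [trinom_two_mul, trinom_two_mul]
        gcongr

theorem nine_pow_le_mul_trinom_two_mul (m : ℕ) : 9 ^ m ≤ (2 * m + 1) * trinom (2 * m) 0 := by
  have hcard : (#(Icc (-m : ℤ) m) : ℤ) = 2 * m + 1 := by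
    rw [Int.card_Icc]; omega
  calc (9 : ℤ) ^ m = (∑ j ∈ Icc (-m : ℤ) m, trinom m j * 1) ^ 2 := by
        rw [sum_congr rfl fun j _ => mul_one _, sum_trinom, ← pow_mul, pow_mul']; norm_num
    _ ≤ (∑ j ∈ Icc (-m : ℤ) m, trinom m j ^ 2) * ∑ j ∈ Icc (-m : ℤ) m, 1 ^ 2 :=
        sum_mul_sq_le_sq_mul_sq _ _ _
    _ = (2 * m + 1) * trinom (2 * m) 0 := by
        rw [trinom_two_mul, one_pow, sum_const, nsmul_one, hcard, mul_comm]

section Ratio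

variable {a : ℕ → ℝ}

theorem monotone_div_of_sq_le_mul (ha : ∀ k, 0 < a k)
    (hlc : ∀ k, a (k + 1) ^ 2 ≤ a k * a (k + 2)) : Monotone fun k => a (k + 1) / a k :=
  monotone_nat_of_le_succ fun k => by
    rw [div_le_div_iff₀ (ha k) (ha (k + 1))]; nlinarith [hlc k]

theorem le_mul_pow_of_div_le (ha : ∀ k, 0 < a k) {L : ℝ} (hL : ∀ k, a (k + 1) / a k ≤ L) (k : ℕ) :
    a k ≤ a 0 * L ^ k := by
  induction k with
  | zero => simp
  | succ k ih =>
    have hL0 : 0 ≤ L := (div_pos (ha 1) (ha 0)).le.trans (hL 0)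
    calc a (k + 1) ≤ L * a k := (div_le_iff₀ (ha k)).mp (hL k)
      _ ≤ L * (a 0 * L ^ k) := by gcongr
      _ = a 0 * L ^ (k + 1) := by ring

theorem tendsto_div_of_sq_le_mul (ha : ∀ k, 0 < a k) (hlc : ∀ k, a (k + 1) ^ 2 ≤ a k * a (k + 2))
    {c : ℝ} (hc : ∀ k, a (k + 1) ≤ c * a k) (hgrowth : ∀ k, c ^ k ≤ (2 * k + 1) * a k) :
    Tendsto (fun k => a (k + 1) / a k) atTop (𝓝 c) := by
  set r := fun k => a (k + 1) / a k
  have hrc (k : ℕ) : r k ≤ c := (div_le_iff₀ (ha k)).mpr (hc k)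
  have hbdd : BddAbove (Set.range r) := ⟨c, Set.forall_mem_range.mpr hrc⟩
  set L := ⨆ k, r k
  have hrL (k : ℕ) : r k ≤ L := le_ciSup hbdd k
  suffices c ≤ L from
    le_antisymm (ciSup_le hrc) this ▸ tendsto_atTop_ciSup (monotone_div_of_sq_le_mul ha hlc) hbdd
  by_contra! hLc
  have hL : 0 < L := (div_pos (ha 1) (ha 0)).trans_le (hrL 0)
  have hq0 : 0 ≤ L / c := (div_pos hL (hL.trans hLc)).le
  have hq1 : L / c < 1 := (div_lt_one (hL.trans hLc)).mpr hLc
  have hbound (k : ℕ) : 1 ≤ a 0 * ((2 * k + 1) * (L / c) ^ k) := by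
    have hck : 0 < c ^ k := pow_pos (hL.trans hLc) k
    calc (1 : ℝ) = c ^ k / c ^ k := (div_self hck.ne').symm
      _ ≤ (2 * k + 1) * (a 0 * L ^ k) / c ^ k := by
        gcongr
        exact (hgrowth k).trans (by gcongr; exact le_mul_pow_of_div_le ha hrL k)
      _ = a 0 * ((2 * k + 1) * (L / c) ^ k) := by rw [div_pow]; ring
  have hzero : Tendsto (fun k : ℕ => a 0 * ((2 * k + 1) * (L / c) ^ k)) atTop (𝓝 0) := by
    have h := ((tendsto_self_mul_const_pow_of_lt_one hq0 hq1).const_mul 2).add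
      (tendsto_pow_atTop_nhds_zero_of_lt_one hq0 hq1)
    simpa [add_mul, mul_assoc] using h.const_mul (a 0)
  linarith [ge_of_tendsto' hzero hbound]

theorem tendsto_div_of_tendsto_div_even (ha : ∀ n, 0 < a n) {c : ℝ} (hc : ∀ n, a (n + 1) ≤ c * a n)
    (h2 : Tendsto (fun k => a (2 * (k + 1)) / a (2 * k)) atTop (𝓝 (c ^ 2))) :
    Tendsto (fun n => a (n + 1) / a n) atTop (𝓝 c) := by
  have hc0 : 0 < c := pos_of_mul_pos_left ((ha 1).trans_le (hc 0)) (ha 0).le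
  have hlower : Tendsto (fun n => a (2 * (n / 2 + 1)) / a (2 * (n / 2)) / c) atTop (𝓝 c) := by
    have h := (h2.comp (Nat.tendsto_div_const_atTop two_ne_zero)).div_const c
    rwa [sq, mul_div_cancel_right₀ c hc0.ne'] at h
  refine tendsto_of_tendsto_of_tendsto_of_le_of_le hlower tendsto_const_nhds (fun n => ?_)
    fun n => (div_le_iff₀ (ha n)).mpr (hc n)
  rw [div_div, div_le_div_iff₀ (mul_pos (ha _) hc0) (ha n)]
  obtain ⟨k, rfl | rfl⟩ := Nat.even_or_odd' n
  · rw [show 2 * k / 2 = k by omega, mul_add_one]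
    nlinarith [mul_le_mul_of_nonneg_right (hc (2 * k + 1)) (ha (2 * k)).le]
  · rw [show (2 * k + 1) / 2 = k by omega, mul_add_one]
    nlinarith [mul_le_mul_of_nonneg_left (hc (2 * k)) (ha (2 * k + 2)).le]

end Ratio

/-- The central trinomial coefficients `Tₙ = C(n, 0)₂` are positive and the ratio of
consecutive central trinomial coefficients tends to `3`. -/
theorem central_trinomial_ratio_tendsto_three :
    (∀ n : ℕ, 0 < trinom n 0) ∧
    Filter.Tendsto (fun n : ℕ => (trinom (n + 1) 0 : ℝ) / (trinom n 0 : ℝ))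
      Filter.atTop (nhds 3) := by
  refine ⟨trinom_pos, ?_⟩
  have hpos (n : ℕ) : (0 : ℝ) < trinom n 0 := by exact_mod_cast trinom_pos n
  have hstep (n : ℕ) : (trinom (n + 1) 0 : ℝ) ≤ 3 * trinom n 0 := by
    exact_mod_cast trinom_succ_zero_le n
  refine tendsto_div_of_tendsto_div_even hpos hstep ?_
  rw [show (3 : ℝ) ^ 2 = 9 by norm_num]
  refine tendsto_div_of_sq_le_mul (fun k => hpos _) (fun k => ?_) (fun k => ?_) (fun k => ?_)
  · exact_mod_cast sq_trinom_two_mul_succ_le k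
  · exact_mod_cast trinom_two_mul_succ_le k
  · exact_mod_cast nine_pow_le_mul_trinom_two_mul k
end

section
/- The sequence of central trinomial coefficients Tₙ := C(n, 0)₂ is not C-finite: there do not exist an integer k ≥ 1 and rational constants c₁, …, c_k such that Tₙ₊ₖ = c₁·Tₙ₊ₖ₋₁ + c₂·Tₙ₊ₖ₋₂ + … + c_k·Tₙ for all natural numbers n. -/
open LaurentPolynomial

/-!
The generating function `F = ∑ Tₙ Xⁿ` satisfies `(1 - 2X - 3X²) F' = (1 + 3X) F`, which is the
recurrence `(n + 2) T_{n+2} = (2n + 3) T_{n+1} + 3(n + 1) Tₙ`; differentiating then shows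
`(1 - 2X - 3X²) F² = 1`. A C-finite sequence has a rational generating function `G / Q`, which
would give `(1 + X)(1 - 3X) G² = Q²` in `ℚ[X]`. This is impossible: `-1` is a root of odd
multiplicity on the left and of even multiplicity on the right.
-/

open Polynomial
open scoped PowerSeries

section

variable {R : Type*} [CommRing R]

lemma coe_trunc_eq_self_of_coeff_eq_zero {f : R⟦X⟧} {k : ℕ}
    (h : ∀ m, k ≤ m → PowerSeries.coeff m f = 0) : (PowerSeries.trunc k f : R⟦X⟧) = f := by
  ext m
  rw [coeff_coe, PowerSeries.coeff_trunc]
  split_ifs with hm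
  · rfl
  · exact (h m (not_lt.mp hm)).symm

lemma exists_coe_mul_mk_eq_coe_of_linear_recurrence {k : ℕ} (c : Fin k → R) {a : ℕ → R}
    (ha : ∀ n, a (n + k) = ∑ i : Fin k, c i * a (n + k - ((i : ℕ) + 1))) :
    ∃ Q G : R[X], Q.coeff 0 = 1 ∧ (Q : R⟦X⟧) * PowerSeries.mk a = G := by
  set Q : R[X] := 1 - ∑ i : Fin k, Polynomial.C (c i) * X ^ ((i : ℕ) + 1)
  refine ⟨Q, PowerSeries.trunc k (Q * PowerSeries.mk a), by simp [Q], ?_⟩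
  refine (coe_trunc_eq_self_of_coeff_eq_zero fun m hm => ?_).symm
  obtain ⟨n, rfl⟩ := Nat.exists_eq_add_of_le' hm
  have hQ : (Q : R⟦X⟧)
      = 1 - ∑ i : Fin k, PowerSeries.C (c i) * PowerSeries.X ^ ((i : ℕ) + 1) := by
    simp only [Q, ← coeToPowerSeries.ringHom_apply, map_sub, map_one, map_sum, map_mul, map_pow]
    simp only [coeToPowerSeries.ringHom_apply, coe_C, coe_X]
  have hterm (i : Fin k) :
      PowerSeries.coeff (n + k)
          (PowerSeries.C (c i) * PowerSeries.X ^ ((i : ℕ) + 1) * PowerSeries.mk a)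
        = c i * a (n + k - ((i : ℕ) + 1)) := by
    rw [mul_assoc, PowerSeries.coeff_C_mul, PowerSeries.coeff_X_pow_mul', if_pos (by omega),
      PowerSeries.coeff_mk]
  simp only [hQ, sub_mul, one_mul, Finset.sum_mul, map_sub, map_sum, hterm, PowerSeries.coeff_mk,
    ha, sub_self]

lemma coeff_X_mul_derivative (p : R[X]) (n : ℕ) : (X * derivative p).coeff n = n * p.coeff n := by
  cases n with
  | zero => simp
  | succ n => rw [coeff_X_mul, coeff_derivative, mul_comm]; push_cast; rfl

lemma mul_sq_ne_sq_of_rootMultiplicity_eq_one [IsDomain R] {P G Q : R[X]} {r : R}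
    (hP : P.rootMultiplicity r = 1) (hQ : Q ≠ 0) : P * G ^ 2 ≠ Q ^ 2 := by
  classical
  intro h
  have hP0 : P ≠ 0 := by rintro rfl; simp at hP
  have hG0 : G ≠ 0 := by rintro rfl; exact hQ (by simpa [eq_comm] using h)
  have hcount := congrArg (fun p => p.roots.count r) h
  simp only [roots_mul (mul_ne_zero hP0 (pow_ne_zero 2 hG0)), roots_pow, Multiset.count_add,
    Multiset.count_nsmul, count_roots, hP] at hcount
  omega

end

lemma coeff_toLaurent_natCast {R : Type*} [Semiring R] (p : R[X]) (n : ℕ) :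
    (toLaurent p).coeff n = p.coeff n :=
  Finsupp.mapDomain_apply Nat.castEmbedding.injective _ n

lemma trinom_zero_eq_coeff (n : ℕ) : trinom n 0 = ((1 + X + X ^ 2 : ℤ[X]) ^ n).coeff n := by
  have hbase : (T (-1) + 1 + T 1 : ℤ[T;T⁻¹]) = T (-1) * toLaurent (1 + X + X ^ 2) := by
    simp only [map_add, map_one, map_pow, toLaurent_X, T_pow, mul_add, mul_one, ← T_add]
    norm_num
  have hpow : (T (-1) + 1 + T 1 : ℤ[T;T⁻¹]) ^ n = T (-n) * toLaurent ((1 + X + X ^ 2) ^ n) := by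
    rw [hbase, mul_pow, T_pow, map_pow]
    norm_num
  rw [trinom, hpow, show (T (-n : ℤ) : ℤ[T;T⁻¹]) = AddMonoidAlgebra.single (-n : ℤ) 1 from rfl,
    AddMonoidAlgebra.coeff_single_mul_apply, one_mul, neg_neg, add_zero, coeff_toLaurent_natCast]

lemma trinom_zero_recurrence (m : ℕ) :
    (m + 2) * trinom (m + 2) 0 = (2 * m + 3) * trinom (m + 1) 0 + (3 * m + 3) * trinom m 0 := by
  set t : ℤ[X] := 1 + X + X ^ 2
  set h : ℤ[X] := (X ^ 2 - 1) * t ^ (m + 1)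
  -- A creative-telescoping certificate: the coefficient of `X^(m+2)` on the right vanishes
  -- because `X * derivative h` has `n`-th coefficient `n * h.coeff n`.
  have hcert : Polynomial.C ((m : ℤ) + 2) * t ^ (m + 2)
      - Polynomial.C (2 * (m : ℤ) + 3) * (X * t ^ (m + 1))
      - Polynomial.C (3 * (m : ℤ) + 3) * (X ^ 2 * t ^ m)
      = X * derivative h - Polynomial.C ((m : ℤ) + 2) * h := by
    simp only [h, t, derivative_mul, derivative_pow, derivative_sub, derivative_one,
      derivative_X, map_add, map_mul, map_natCast, map_ofNat]
    push_cast
    ring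
  have hcoeff := congrArg (coeff · (m + 2)) hcert
  simp only [coeff_sub, coeff_C_mul, coeff_X_mul_derivative, coeff_X_pow_mul] at hcoeff
  rw [coeff_X_mul] at hcoeff
  simp only [trinom_zero_eq_coeff]
  push_cast at hcoeff
  linear_combination hcoeff

lemma trinom_zero_zero : trinom 0 0 = 1 := by simp [trinom_zero_eq_coeff]

lemma trinom_one_zero : trinom 1 0 = 1 := by simp [trinom_zero_eq_coeff, coeff_one, coeff_X]

lemma trinom_two_zero : trinom 2 0 = 3 := by
  have := trinom_zero_recurrence 0
  norm_num [trinom_zero_zero, trinom_one_zero] at this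
  omega

noncomputable def centralTrinomSeries : ℚ⟦X⟧ := PowerSeries.mk fun n => (trinom n 0 : ℚ)

lemma centralTrinomSeries_derivative :
    (1 - 2 * PowerSeries.X - 3 * PowerSeries.X ^ 2) * d⁄dX ℚ centralTrinomSeries
      = (1 + 3 * PowerSeries.X) * centralTrinomSeries := by
  ext n
  rw [show (2 : ℚ⟦X⟧) = PowerSeries.C 2 from (map_ofNat _ 2).symm,
    show (3 : ℚ⟦X⟧) = PowerSeries.C 3 from (map_ofNat _ 3).symm]
  simp only [sub_mul, add_mul, one_mul, mul_assoc, pow_two, map_sub, map_add,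
    PowerSeries.coeff_C_mul, PowerSeries.coeff_derivative, centralTrinomSeries,
    PowerSeries.coeff_mk]
  rcases n with _ | _ | m
  · simp [trinom_zero_zero, trinom_one_zero]
  · norm_num [PowerSeries.coeff_succ_X_mul, PowerSeries.coeff_derivative, trinom_zero_zero,
      trinom_one_zero, trinom_two_zero]
  · simp only [PowerSeries.coeff_succ_X_mul, PowerSeries.coeff_derivative, PowerSeries.coeff_mk]
    have hrec := congrArg (Int.cast : ℤ → ℚ) (trinom_zero_recurrence (m + 1))
    push_cast at hrec ⊢
    linear_combination hrec

lemma one_sub_two_X_sub_three_X_sq_mul_centralTrinomSeries_sq :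
    (1 - 2 * PowerSeries.X - 3 * PowerSeries.X ^ 2) * centralTrinomSeries ^ 2 = 1 := by
  apply PowerSeries.derivative.ext
  · have hP :
        d⁄dX ℚ (1 - 2 * PowerSeries.X - 3 * PowerSeries.X ^ 2) = -(2 + 6 * PowerSeries.X) := by
      have hnum (n : ℕ) [n.AtLeastTwo] : d⁄dX ℚ (OfNat.ofNat n : ℚ⟦X⟧) = 0 :=
        Derivation.map_natCast _ n
      simp only [map_sub, Derivation.map_one_eq_zero, Derivation.leibniz, PowerSeries.derivative_X,
        smul_eq_mul, mul_one, hnum, mul_zero, add_zero, zero_sub, Derivation.leibniz_pow,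
        Nat.add_one_sub_one, pow_one, nsmul_eq_mul, Nat.cast_ofNat, neg_add_rev]
      ring
    rw [Derivation.leibniz, Derivation.leibniz_pow, hP, smul_eq_mul, smul_eq_mul, nsmul_eq_mul,
      Derivation.map_one_eq_zero]
    linear_combination (2 * centralTrinomSeries) * centralTrinomSeries_derivative
  · simp [centralTrinomSeries, trinom_zero_zero]

lemma rootMultiplicity_neg_one_one_sub_two_X_sub_three_X_sq :
    (1 - 2 * X - 3 * X ^ 2 : ℚ[X]).rootMultiplicity (-1) = 1 := by
  have hfac : (1 - 2 * X - 3 * X ^ 2 : ℚ[X]) = (X - Polynomial.C (-1)) * (1 - 3 * X) := by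
    simp only [map_neg, map_one]
    ring
  rw [hfac, rootMultiplicity_mul, rootMultiplicity_X_sub_C_self, rootMultiplicity_eq_zero]
  · norm_num
  · rw [← hfac]
    exact fun h => by simpa using congrArg (eval 0) h

/-- The sequence of central trinomial coefficients `Tₙ = C(n, 0)₂` is not C-finite:
it satisfies no homogeneous linear recurrence with constant rational coefficients. -/
theorem central_trinomial_not_cfinite :
    ¬ ∃ (k : ℕ) (_ : 1 ≤ k) (c : Fin k → ℚ), ∀ n : ℕ,
      (trinom (n + k) 0 : ℚ) =
        ∑ i : Fin k, c i * (trinom (n + k - ((i : ℕ) + 1)) 0 : ℚ) := by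
  rintro ⟨k, -, c, hc⟩
  obtain ⟨Q, G, hQ, hQG⟩ := exists_coe_mul_mk_eq_coe_of_linear_recurrence c
    (a := fun n => (trinom n 0 : ℚ)) hc
  change (Q : ℚ⟦X⟧) * centralTrinomSeries = G at hQG
  have hpoly : (1 - 2 * X - 3 * X ^ 2 : ℚ[X]) * G ^ 2 = Q ^ 2 := by
    apply Polynomial.coe_injective
    simp only [← coeToPowerSeries.ringHom_apply, map_mul, map_sub, map_one, map_ofNat, map_pow]
    simp only [coeToPowerSeries.ringHom_apply, coe_X, ← hQG]
    linear_combination (Q : ℚ⟦X⟧) ^ 2 * one_sub_two_X_sub_three_X_sq_mul_centralTrinomSeries_sq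
  exact mul_sq_ne_sq_of_rootMultiplicity_eq_one
    rootMultiplicity_neg_one_one_sub_two_X_sub_three_X_sq (by rintro rfl; simp at hQ) hpoly
end
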